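/- arXiv:1808.06734 — 2 statements merged into one kernel-verified Lean document; each statement's English description precedes it below -/
import Mathlib

section
/- If G is a non-bipartite finite connected graph and H is any finite connected graph, then acop(H □ G) ≤ acop(H) + acop(G). -/
open SimpleGraph

universe u v

variable {V : Type u}

/-- A configuration in the game of Cops and Robbers with `n` cops:
the positions of the cops together with the position of the robber. -/
abbrev CRConfig (V : Type u) (n : ℕ) : Type u := (Fin n → V) × V

/-- A strategy for `n` cops in the *fully active* game on `G`:
initial positions, together with a move function (which may depend on the
full history of the play and on the current configuration) under which
every cop moves to an adjacent vertex on every turn. -/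
structure ActiveCopStrategy (G : SimpleGraph V) (n : ℕ) where
  init : Fin n → V
  move : List (CRConfig V n) → CRConfig V n → Fin n → V
  move_adj : ∀ h c i, G.Adj (c.1 i) (move h c i)

/-- A strategy for the robber in the *fully active* game on `G`:
an initial position (chosen knowing the cops' initial positions),
together with a move function (which may depend on the full history and on
the current configuration, whose first component records the cops' newly
chosen positions) under which the robber moves to an adjacent vertex on
every turn. -/
structure ActiveRobberStrategy (G : SimpleGraph V) (n : ℕ) where
  init : (Fin n → V) → V
  move : List (CRConfig V n) → CRConfig V n → V
  move_adj : ∀ h c, G.Adj c.2 (move h c)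

/-- A strategy for `n` cops in the *passive* (classical) game on `G`:
on her turn, each cop either moves to an adjacent vertex or stays put. -/
structure PassiveCopStrategy (G : SimpleGraph V) (n : ℕ) where
  init : Fin n → V
  move : List (CRConfig V n) → CRConfig V n → Fin n → V
  move_adj : ∀ h c i, G.Adj (c.1 i) (move h c i) ∨ move h c i = c.1 i

/-- A strategy for the robber in the *passive* (classical) game on `G`:
on his turn the robber either moves to an adjacent vertex or stays put. -/
structure PassiveRobberStrategy (G : SimpleGraph V) (n : ℕ) where
  init : (Fin n → V) → V
  move : List (CRConfig V n) → CRConfig V n → V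
  move_adj : ∀ h c, G.Adj c.2 (move h c) ∨ move h c = c.2

/-- The play determined by (the data of) a cop strategy and a robber strategy:
`crPlay n cinit rinit cmove rmove t` is the pair consisting of the history of
configurations strictly before round `t` and the configuration after round `t`
(a round consists of a cop move followed by a robber move; round `0` is the
initial placement, cops first, then the robber). -/
def crPlay (n : ℕ) (cinit : Fin n → V) (rinit : (Fin n → V) → V)
    (cmove : List (CRConfig V n) → CRConfig V n → Fin n → V)
    (rmove : List (CRConfig V n) → CRConfig V n → V) :
    ℕ → List (CRConfig V n) × CRConfig V n
  | 0 => ([], (cinit, rinit cinit))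
  | t + 1 =>
      let p := crPlay n cinit rinit cmove rmove t
      let c' := cmove p.1 p.2
      (p.1 ++ [p.2], (c', rmove p.1 (c', p.2.2)))

/-- The cops capture the robber in the given play: at some point of the play
(either right after a robber move, or right after a cop move) some cop
occupies the robber's vertex. -/
def crCaptures (n : ℕ) (cinit : Fin n → V) (rinit : (Fin n → V) → V)
    (cmove : List (CRConfig V n) → CRConfig V n → Fin n → V)
    (rmove : List (CRConfig V n) → CRConfig V n → V) : Prop :=
  ∃ t : ℕ,
    (∃ i, (crPlay n cinit rinit cmove rmove t).2.1 i
        = (crPlay n cinit rinit cmove rmove t).2.2) ∨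
    (∃ i, cmove (crPlay n cinit rinit cmove rmove t).1
            (crPlay n cinit rinit cmove rmove t).2 i
        = (crPlay n cinit rinit cmove rmove t).2.2)

/-- In the fully active game, the given cop strategy captures the robber
playing the given strategy. -/
def ActiveCapture {G : SimpleGraph V} {n : ℕ} (cs : ActiveCopStrategy G n)
    (rs : ActiveRobberStrategy G n) : Prop :=
  crCaptures n cs.init rs.init cs.move rs.move

/-- In the passive game, the given cop strategy captures the robber
playing the given strategy. -/
def PassiveCapture {G : SimpleGraph V} {n : ℕ} (cs : PassiveCopStrategy G n)
    (rs : PassiveRobberStrategy G n) : Prop :=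
  crCaptures n cs.init rs.init cs.move rs.move

/-- `n` cops have a winning strategy in the fully active game on `G`. -/
def ActiveCopsWin (G : SimpleGraph V) (n : ℕ) : Prop :=
  ∃ cs : ActiveCopStrategy G n, ∀ rs : ActiveRobberStrategy G n, ActiveCapture cs rs

/-- `n` cops have a winning strategy in the passive (classical) game on `G`. -/
def PassiveCopsWin (G : SimpleGraph V) (n : ℕ) : Prop :=
  ∃ cs : PassiveCopStrategy G n, ∀ rs : PassiveRobberStrategy G n, PassiveCapture cs rs

/-- The fully active cop number of `G`. -/
noncomputable def acop (G : SimpleGraph V) : ℕ := sInf {n | ActiveCopsWin G n}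

/-- The (classical, passive) cop number of `G`. -/
noncomputable def copNumber (G : SimpleGraph V) : ℕ := sInf {n | PassiveCopsWin G n}

/-! Split the cops into a team of `acop H` and a team of `acop G`. The first team plays a winning
strategy of `H` in the first coordinate, advancing its simulated game by one round exactly when the
robber moves in `H`, and copying the robber's moves otherwise, so that it keeps his `G`-coordinate.
It cannot know that coordinate in advance: it first walks from a fixed vertex of `G` to the robber's
starting `G`-coordinate and then retraces his `G`-moves in order, gaining one step on him at each of
his `H`-moves, so after `lag` of them it is level with him. The second team does the same with the
factors exchanged. Since the robber moves infinitely often in `H` or in `G`, one team catches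
him. -/

namespace Nat

variable {p q : ℕ → Prop} [DecidablePred p] [DecidablePred q]

theorem count_congr {n : ℕ} (h : ∀ k < n, p k ↔ q k) : count p n = count q n :=
  le_antisymm (count_mono_left fun k hk => (h k hk).1) (count_mono_left fun k hk => (h k hk).2)

theorem lt_card_of_lt_count {j n : ℕ} (h : j < count p n) (hf : (Set.ofPred p).Finite) :
    j < hf.toFinset.card :=
  h.trans_le (count_le_card hf n)

theorem exists_count_eq {j n : ℕ} (h : j ≤ count p n) : ∃ s ≤ n, count p s = j := by
  rcases h.lt_or_eq with h | h
  · exact ⟨nth p j, (nth_lt_of_lt_count h).le, count_nth (lt_card_of_lt_count h)⟩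
  · exact ⟨n, le_rfl, h.symm⟩

end Nat

section Destutter

open scoped Classical

variable {α : Type*} (x : ℕ → α)

def ChangesAt (s : ℕ) : Prop := x (s + 1) ≠ x s

/-- The sequence of values taken by `x`, with repetitions of consecutive values removed:
`destutter x j` is the value of `x` right after its `j`-th change. -/
noncomputable def destutter : ℕ → α
  | 0 => x 0
  | j + 1 => x (Nat.nth (ChangesAt x) j + 1)

theorem destutter_count (t : ℕ) : destutter x (Nat.count (ChangesAt x) t) = x t := by
  induction t with
  | zero => rfl
  | succ t ih =>
    by_cases ht : ChangesAt x t
    · rw [Nat.count_succ_eq_succ_count_iff.2 ht, destutter, Nat.nth_count ht]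
    · rw [Nat.count_succ_eq_count_iff.2 ht, ih]
      exact (not_not.1 ht).symm

variable {x}

theorem changesAt_nth_of_lt_count {j t : ℕ} (h : j < Nat.count (ChangesAt x) t) :
    ChangesAt x (Nat.nth (ChangesAt x) j) ∧ Nat.count (ChangesAt x) (Nat.nth (ChangesAt x) j) = j :=
  ⟨Nat.nth_mem j (Nat.lt_card_of_lt_count h), Nat.count_nth (Nat.lt_card_of_lt_count h)⟩

theorem destutter_adj {G : SimpleGraph α} (hx : ∀ s, ChangesAt x s → G.Adj (x s) (x (s + 1)))
    {j t : ℕ} (h : j < Nat.count (ChangesAt x) t) :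
    G.Adj (destutter x j) (destutter x (j + 1)) := by
  obtain ⟨hchange, hcount⟩ := changesAt_nth_of_lt_count h
  have hj : destutter x j = x (Nat.nth (ChangesAt x) j) := by
    rw [← destutter_count x, hcount]
  exact hj ▸ hx _ hchange

theorem count_changesAt_congr {x' : ℕ → α} {t : ℕ} (hx : ∀ s ≤ t, x s = x' s) :
    Nat.count (ChangesAt x) t = Nat.count (ChangesAt x') t :=
  Nat.count_congr fun s hs => by simp only [ChangesAt, hx s hs.le, hx (s + 1) hs]

theorem destutter_congr {x' : ℕ → α} {j t : ℕ} (hx : ∀ s ≤ t, x s = x' s)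
    (hj : j ≤ Nat.count (ChangesAt x) t) : destutter x j = destutter x' j := by
  obtain ⟨s, hst, rfl⟩ := Nat.exists_count_eq hj
  rw [destutter_count, count_changesAt_congr fun k hk => hx k (hk.trans hst), destutter_count,
    hx s hst]

end Destutter

section Play

variable {n : ℕ} {cinit : Fin n → V} {rinit : (Fin n → V) → V}
  {cmove : List (CRConfig V n) → CRConfig V n → Fin n → V}
  {rmove : List (CRConfig V n) → CRConfig V n → V}

theorem crPlay_fst (t : ℕ) :
    (crPlay n cinit rinit cmove rmove t).1 =
      (List.range t).map fun k => (crPlay n cinit rinit cmove rmove k).2 := by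
  induction t with
  | zero => rfl
  | succ t ih => rw [List.range_succ, List.map_append, ← ih]; rfl

theorem length_crPlay_fst (t : ℕ) : (crPlay n cinit rinit cmove rmove t).1.length = t := by
  simp [crPlay_fst]

end Play

theorem activeCopsWin_of_causal [Nonempty V] {G : SimpleGraph V} {n : ℕ}
    (hG : ∀ v, ∃ w, G.Adj v w) (pos : (ℕ → V) → ℕ → Fin n → V)
    (causal : ∀ u u' t, (∀ s, G.Adj (u s) (u (s + 1))) → (∀ s < t, u s = u' s) →
      pos u t = pos u' t)
    (legal : ∀ u, (∀ t, G.Adj (u t) (u (t + 1))) → ∀ t i, G.Adj (pos u t i) (pos u (t + 1) i))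
    (catches : ∀ u, (∀ t, G.Adj (u t) (u (t + 1))) →
      ∃ t i, pos u t i = u t ∨ pos u (t + 1) i = u t) :
    ActiveCopsWin G n := by
  classical
  let traj (h : List (CRConfig V n)) (c : CRConfig V n) (k : ℕ) : V :=
    (h.map Prod.snd).getD k c.2
  let target (h : List (CRConfig V n)) (c : CRConfig V n) : Fin n → V :=
    pos (traj h c) (h.length + 1)
  -- `hG` only supplies legal moves after histories that cannot occur in a play.
  let cs : ActiveCopStrategy G n :=
    { init := pos (fun _ => Classical.arbitrary V) 0
      move := fun h c i =>
        if G.Adj (c.1 i) (target h c i) then target h c i else (hG (c.1 i)).choose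
      move_adj := fun h c i => by
        split_ifs with hadj
        exacts [hadj, (hG _).choose_spec] }
  refine ⟨cs, fun rs => ?_⟩
  let play := crPlay n cs.init rs.init cs.move rs.move
  let ρ : ℕ → V := fun t => (play t).2.2
  have hρ : ∀ t, G.Adj (ρ t) (ρ (t + 1)) := fun t =>
    rs.move_adj (play t).1 (cs.move (play t).1 (play t).2, (play t).2.2)
  have htraj : ∀ t, ∀ s < t + 1, traj (play t).1 (play t).2 s = ρ s := by
    intro t s hs
    simp only [traj, play, crPlay_fst, List.map_map]
    rcases (Nat.lt_succ_iff.1 hs).lt_or_eq with hs | rfl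
    · simp [List.getD_eq_getElem?_getD, hs, ρ, play]
    · simp [ρ, play]
  have hcops : ∀ t, (play t).2.1 = pos ρ t := by
    intro t
    induction t with
    | zero => exact (causal _ _ 0 hρ fun s hs => absurd hs s.not_lt_zero).symm
    | succ t ih =>
      have htarget : target (play t).1 (play t).2 = pos ρ (t + 1) := by
        simp only [target, play, length_crPlay_fst]
        exact (causal _ _ _ hρ fun s hs => (htraj t s hs).symm).symm
      funext i
      change (if G.Adj ((play t).2.1 i) (target (play t).1 (play t).2 i)
        then target (play t).1 (play t).2 i else _) = _
      rw [htarget, ih, if_pos (legal ρ hρ t i)]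
  obtain ⟨t, i, h | h⟩ := catches ρ hρ
  · exact ⟨t, Or.inl ⟨i, (congrFun (hcops t) i).trans h⟩⟩
  · exact ⟨t, Or.inr ⟨i, (congrFun (hcops (t + 1)) i).trans h⟩⟩

namespace ActiveCopStrategy

variable {G : SimpleGraph V} {n : ℕ} (cs : ActiveCopStrategy G n)

/-- The play of `cs` against a robber who walks along `r` whatever the cops do. -/
def playAgainst (r : ℕ → V) : ℕ → List (CRConfig V n) × CRConfig V n :=
  crPlay n cs.init (fun _ => r 0) cs.move fun h _ => r (h.length + 1)

theorem playAgainst_robber (r : ℕ → V) (k : ℕ) : (cs.playAgainst r k).2.2 = r k := by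
  cases k with
  | zero => rfl
  | succ k => exact congrArg (fun j => r (j + 1)) (length_crPlay_fst k)

theorem playAgainst_adj (r : ℕ → V) (k : ℕ) (i : Fin n) :
    G.Adj ((cs.playAgainst r k).2.1 i) ((cs.playAgainst r (k + 1)).2.1 i) :=
  cs.move_adj _ _ i

theorem playAgainst_congr {r r' : ℕ → V} {k : ℕ} (h : ∀ j ≤ k, r j = r' j) :
    cs.playAgainst r k = cs.playAgainst r' k := by
  induction k with
  | zero => simp only [playAgainst, crPlay, h 0 le_rfl]
  | succ k ih =>
    have hk := ih fun j hj => h j (hj.trans k.le_succ)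
    simp only [playAgainst, crPlay] at hk ⊢
    rw [hk, length_crPlay_fst, h (k + 1) le_rfl]

theorem playAgainst_cops_congr {r r' : ℕ → V} {k : ℕ} (h : ∀ j < k, r j = r' j) :
    (cs.playAgainst r k).2.1 = (cs.playAgainst r' k).2.1 := by
  cases k with
  | zero => rfl
  | succ k =>
    change cs.move (cs.playAgainst r k).1 (cs.playAgainst r k).2 = _
    rw [cs.playAgainst_congr fun j hj => h j (Nat.lt_succ_of_le hj)]
    rfl

theorem exists_playAgainst_eq (hcs : ∀ rs : ActiveRobberStrategy G n, ActiveCapture cs rs)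
    (hG : ∀ v, ∃ w, G.Adj v w) {r : ℕ → V} (hr : ∀ k, G.Adj (r k) (r (k + 1))) :
    ∃ k i, (cs.playAgainst r k).2.1 i = r k ∨ (cs.playAgainst r (k + 1)).2.1 i = r k := by
  classical
  let rs : ActiveRobberStrategy G n :=
    { init := fun _ => r 0
      move := fun h c => if G.Adj c.2 (r (h.length + 1)) then r (h.length + 1) else (hG c.2).choose
      move_adj := fun h c => by
        split_ifs with hadj
        exacts [hadj, (hG _).choose_spec] }
  have hplay : ∀ k, crPlay n cs.init rs.init cs.move rs.move k = cs.playAgainst r k := by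
    intro k
    induction k with
    | zero => rfl
    | succ k ih =>
      have hlen : (cs.playAgainst r k).1.length = k := length_crPlay_fst k
      have hmove : rs.move (cs.playAgainst r k).1
          (cs.move (cs.playAgainst r k).1 (cs.playAgainst r k).2, (cs.playAgainst r k).2.2) =
          r ((cs.playAgainst r k).1.length + 1) := by
        change (if G.Adj (cs.playAgainst r k).2.2 (r ((cs.playAgainst r k).1.length + 1))
          then _ else _) = _
        rw [hlen, cs.playAgainst_robber, if_pos (hr k)]
      simp only [crPlay, ih]
      rw [hmove]
      rfl
  obtain ⟨k, hk⟩ := hcs rs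
  simp only [hplay, cs.playAgainst_robber] at hk
  obtain ⟨i, hi⟩ | ⟨i, hi⟩ := hk
  exacts [⟨k, i, Or.inl hi⟩, ⟨k, i, Or.inr hi⟩]

end ActiveCopStrategy

theorem activeCopsWin_zero_of_isIsolated {G : SimpleGraph V} {v : V} (hv : G.IsIsolated v) :
    ActiveCopsWin G 0 :=
  ⟨⟨Fin.elim0, fun _ _ i => i.elim0, fun _ _ i => i.elim0⟩,
    fun rs => absurd (rs.move_adj [] (Fin.elim0, v)) (hv _)⟩

theorem exists_activeCopsWin [Fintype V] (G : SimpleGraph V) : ∃ n, ActiveCopsWin G n := by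
  by_cases hG : ∃ v, G.IsIsolated v
  · obtain ⟨v, hv⟩ := hG
    exact ⟨0, activeCopsWin_zero_of_isIsolated hv⟩
  · have hG : ∀ v, ∃ w, G.Adj v w := by simpa [SimpleGraph.IsIsolated] using hG
    let e := Fintype.equivFin V
    refine ⟨Fintype.card V, ⟨e.symm, fun _ c i => (hG (c.1 i)).choose,
      fun _ c i => (hG (c.1 i)).choose_spec⟩, fun rs => ?_⟩
    exact ⟨0, Or.inl ⟨e (rs.init e.symm), e.symm_apply_apply _⟩⟩

theorem activeCopsWin_acop [Fintype V] (G : SimpleGraph V) : ActiveCopsWin G (acop G) :=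
  Nat.sInf_mem (exists_activeCopsWin G)

namespace SimpleGraph

variable {V₁ V₂ : Type*} {H : SimpleGraph V₁} {G : SimpleGraph V₂}

theorem boxProd_adj_of_fst_ne {x y : V₁ × V₂} (h : (H □ G).Adj x y) (hne : x.1 ≠ y.1) :
    H.Adj x.1 y.1 ∧ x.2 = y.2 :=
  h.resolve_right fun h' => hne h'.2

theorem boxProd_adj_of_snd_ne {x y : V₁ × V₂} (h : (H □ G).Adj x y) (hne : x.2 ≠ y.2) :
    G.Adj x.2 y.2 ∧ x.1 = y.1 :=
  h.resolve_left fun h' => hne h'.2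

theorem boxProd_adj_swap {x y : V₁ × V₂} : (G □ H).Adj x.swap y.swap ↔ (H □ G).Adj x y :=
  or_comm

end SimpleGraph

section BoxProdWalk

variable {V₁ V₂ : Type*} {H : SimpleGraph V₁} {G : SimpleGraph V₂} {u : ℕ → V₁ × V₂}

theorem changesAt_snd_iff (hu : ∀ t, (H □ G).Adj (u t) (u (t + 1))) (s : ℕ) :
    ChangesAt (fun t => (u t).2) s ↔ ¬ ChangesAt (fun t => (u t).1) s := by
  rcases hu s with ⟨h, h'⟩ | ⟨h, h'⟩
  · simp [ChangesAt, h', h.ne']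
  · simp [ChangesAt, h', h.ne']

open scoped Classical in
theorem count_changesAt_fst_add_snd (hu : ∀ t, (H □ G).Adj (u t) (u (t + 1))) (t : ℕ) :
    Nat.count (ChangesAt fun s => (u s).1) t + Nat.count (ChangesAt fun s => (u s).2) t = t := by
  induction t with
  | zero => rfl
  | succ t ih =>
    rw [Nat.count_succ, Nat.count_succ, changesAt_snd_iff hu]
    split_ifs <;> omega

theorem infinite_changesAt_fst_or_snd (hu : ∀ t, (H □ G).Adj (u t) (u (t + 1))) :
    {s | ChangesAt (fun t => (u t).1) s}.Infinite ∨
      {s | ChangesAt (fun t => (u t).2) s}.Infinite := by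
  refine Set.infinite_union.1 ?_
  convert Set.infinite_univ (α := ℕ)
  refine Set.eq_univ_of_forall fun s => ?_
  by_cases h : ChangesAt (fun t => (u t).1) s
  exacts [Or.inl h, Or.inr ((changesAt_snd_iff hu s).2 h)]

end BoxProdWalk

namespace Shadow

open scoped Classical

variable {V₁ V₂ : Type*} {H : SimpleGraph V₁} {G : SimpleGraph V₂} {m : ℕ}
  (cs : ActiveCopStrategy H m) {w₀ : V₂} (walkFrom : ∀ y, G.Walk w₀ y) (u : ℕ → V₁ × V₂)

noncomputable def lag : ℕ := (walkFrom (u 0).2).length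

/-- The route of the team in `G`: first to the robber's starting coordinate, then along the
successive `G`-coordinates of the robber. -/
noncomputable def trail (k : ℕ) : V₂ :=
  if k < lag walkFrom u then (walkFrom (u 0).2).getVert k
  else destutter (fun t => (u t).2) (k - lag walkFrom u)

noncomputable def simRobber (j : ℕ) : V₁ := destutter (fun t => (u t).1) (lag walkFrom u + j)

/-- Once the robber has made `c ≥ lag` moves in `H`, the team's `H`-coordinates are those of the
simulated cops after their `(c - lag + 1)`-th move. -/
noncomputable def shadowPos : ℕ → Fin m → V₁ × V₂
  | 0, i => (cs.init i, w₀)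
  | t + 1, i =>
    if Nat.count (ChangesAt fun s => (u s).1) t < lag walkFrom u then
      (cs.init i, trail walkFrom u (t + 1))
    else
      ((cs.playAgainst (simRobber walkFrom u)
        (Nat.count (ChangesAt fun s => (u s).1) t - lag walkFrom u + 1)).2.1 i, (u t).2)

variable {walkFrom u}

theorem eq_of_lag_eq_zero (h : lag walkFrom u = 0) : w₀ = (u 0).2 :=
  SimpleGraph.Walk.eq_of_length_eq_zero h

theorem trail_zero : trail walkFrom u 0 = w₀ := by
  unfold trail
  split_ifs with h
  · exact SimpleGraph.Walk.getVert_zero _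
  · rw [Nat.zero_sub]
    exact (eq_of_lag_eq_zero (Nat.eq_zero_of_not_pos h)).symm

theorem trail_adj (hu : ∀ t, (H □ G).Adj (u t) (u (t + 1))) {k t : ℕ}
    (hk : k + 1 ≤ lag walkFrom u + Nat.count (ChangesAt fun s => (u s).2) t) :
    G.Adj (trail walkFrom u k) (trail walkFrom u (k + 1)) := by
  have hlag : lag walkFrom u = (walkFrom (u 0).2).length := rfl
  rcases lt_trichotomy (k + 1) (lag walkFrom u) with hlt | heq | hgt
  · rw [trail, if_pos (by omega), trail, if_pos hlt]
    exact (walkFrom _).adj_getVert_succ (by omega)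
  · rw [trail, if_pos (by omega), trail, if_neg (by omega), heq, Nat.sub_self]
    have := (walkFrom (u 0).2).adj_getVert_succ (i := k) (by omega)
    rwa [show k + 1 = (walkFrom (u 0).2).length by omega,
      SimpleGraph.Walk.getVert_length] at this
  · rw [trail, if_neg (by omega), trail, if_neg (by omega),
      show k + 1 - lag walkFrom u = k - lag walkFrom u + 1 by omega]
    exact destutter_adj (x := fun s => (u s).2)
      (fun s hs => (boxProd_adj_of_snd_ne (hu s) (Ne.symm hs)).1) (t := t) (by omega)

theorem trail_eq_snd (hu : ∀ t, (H □ G).Adj (u t) (u (t + 1))) {t : ℕ}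
    (h : Nat.count (ChangesAt fun s => (u s).1) t = lag walkFrom u) :
    trail walkFrom u t = (u t).2 := by
  have hsum := count_changesAt_fst_add_snd hu t
  rw [trail, if_neg (by omega),
    show t - lag walkFrom u = Nat.count (ChangesAt fun s => (u s).2) t by omega, destutter_count]

section Causality

variable {u' : ℕ → V₁ × V₂} {t : ℕ}

theorem lag_congr (hag : ∀ s ≤ t, u s = u' s) : lag walkFrom u = lag walkFrom u' := by
  rw [lag, lag, hag 0 t.zero_le]

theorem trail_congr (hag : ∀ s ≤ t, u s = u' s) {k : ℕ}
    (hk : k ≤ lag walkFrom u + Nat.count (ChangesAt fun s => (u s).2) t) :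
    trail walkFrom u k = trail walkFrom u' k := by
  rw [trail, trail, ← lag_congr hag, hag 0 t.zero_le]
  split_ifs
  · rfl
  · exact destutter_congr (fun s hs => congrArg Prod.snd (hag s hs)) (by omega)

theorem simRobber_congr (hag : ∀ s ≤ t, u s = u' s) {j : ℕ}
    (hj : lag walkFrom u + j ≤ Nat.count (ChangesAt fun s => (u s).1) t) :
    simRobber walkFrom u j = simRobber walkFrom u' j := by
  rw [simRobber, simRobber, ← lag_congr hag]
  exact destutter_congr (fun s hs => congrArg Prod.fst (hag s hs)) hj

theorem shadowPos_congr (hu : ∀ t, (H □ G).Adj (u t) (u (t + 1)))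
    (hag : ∀ s < t, u s = u' s) : shadowPos cs walkFrom u t = shadowPos cs walkFrom u' t := by
  cases t with
  | zero => rfl
  | succ t =>
    have hag' : ∀ s ≤ t, u s = u' s := fun s hs => hag s (Nat.lt_succ_of_le hs)
    have hcount := count_changesAt_congr (x := fun s => (u s).1) (x' := fun s => (u' s).1)
      fun s hs => congrArg Prod.fst (hag' s hs)
    have hsum := count_changesAt_fst_add_snd hu t
    funext i
    simp only [shadowPos, ← hcount, ← lag_congr hag', hag' t le_rfl]
    split_ifs
    · rw [trail_congr hag' (by omega)]
    · rw [cs.playAgainst_cops_congr fun j hj => simRobber_congr hag' (by omega)]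

end Causality

theorem shadowPos_adj (hu : ∀ t, (H □ G).Adj (u t) (u (t + 1))) (t : ℕ) (i : Fin m) :
    (H □ G).Adj (shadowPos cs walkFrom u t i) (shadowPos cs walkFrom u (t + 1) i) := by
  cases t with
  | zero =>
    simp only [shadowPos, Nat.count_zero]
    split_ifs with h
    · have := trail_adj (walkFrom := walkFrom) hu (k := 0) (t := 0)
        (by rw [Nat.count_zero]; omega)
      rw [trail_zero] at this
      exact boxProd_adj_right.2 this
    · rw [← eq_of_lag_eq_zero (Nat.eq_zero_of_not_pos h), Nat.zero_sub]
      exact boxProd_adj_left.2 (cs.playAgainst_adj _ 0 i)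
  | succ t =>
    have hmono := Nat.count_monotone (ChangesAt fun s => (u s).1) (Nat.le_add_right t 1)
    simp only [shadowPos]
    by_cases hpost : Nat.count (ChangesAt fun s => (u s).1) (t + 1) < lag walkFrom u
    · rw [if_pos (hmono.trans_lt hpost), if_pos hpost]
      have := count_changesAt_fst_add_snd hu (t + 1)
      exact boxProd_adj_right.2 (trail_adj hu (t := t + 1) (by omega))
    rw [if_neg hpost]
    by_cases hch : ChangesAt (fun s => (u s).1) t
    · have hsnd := (boxProd_adj_of_fst_ne (hu t) (Ne.symm hch)).2
      have hcount := Nat.count_succ_eq_succ_count_iff.2 hch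
      rw [hcount] at hpost
      split_ifs with hpre
      · rw [trail_eq_snd hu (by omega),
          show Nat.count _ (t + 1) - lag walkFrom u + 1 = 0 + 1 by omega]
        exact boxProd_adj_left.2 (cs.playAgainst_adj _ 0 i)
      · rw [hcount, ← hsnd,
          show Nat.count (ChangesAt fun s => (u s).1) t + 1 - lag walkFrom u + 1 =
            Nat.count (ChangesAt fun s => (u s).1) t - lag walkFrom u + 1 + 1 by omega]
        exact boxProd_adj_left.2 (cs.playAgainst_adj _ _ i)
    · rw [Nat.count_succ_eq_count_iff.2 hch] at hpost ⊢
      rw [if_neg hpost]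
      exact boxProd_adj_right.2 ((hu t).resolve_left fun h => hch h.1.ne').1

theorem shadowPos_succ_of_changesAt (hu : ∀ t, (H □ G).Adj (u t) (u (t + 1))) {s k : ℕ}
    (hs : ChangesAt (fun t => (u t).1) s)
    (hk : Nat.count (ChangesAt fun t => (u t).1) (s + 1) = lag walkFrom u + k) (i : Fin m) :
    shadowPos cs walkFrom u (s + 1) i =
      ((cs.playAgainst (simRobber walkFrom u) k).2.1 i, (u (s + 1)).2) := by
  rw [Nat.count_succ_eq_succ_count_iff.2 hs] at hk
  simp only [shadowPos]
  split_ifs with h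
  · obtain rfl : k = 0 := by omega
    rw [trail_eq_snd hu (by rw [Nat.count_succ_eq_succ_count_iff.2 hs]; omega)]
    rfl
  · rw [show Nat.count (ChangesAt fun t => (u t).1) s - lag walkFrom u + 1 = k by omega,
      (boxProd_adj_of_fst_ne (hu s) (Ne.symm hs)).2]

/-- The simulated robber walks in `H` forever, so `cs` catches it; the team then stands on the
robber, whose `G`-coordinate it shares. -/
theorem exists_shadowPos_eq (hcs : ∀ rs : ActiveRobberStrategy H m, ActiveCapture cs rs)
    (hH : H.Connected) (hu : ∀ t, (H □ G).Adj (u t) (u (t + 1)))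
    (hinf : {s | ChangesAt (fun t => (u t).1) s}.Infinite) :
    ∃ t i, shadowPos cs walkFrom u t i = u t ∨ shadowPos cs walkFrom u (t + 1) i = u t := by
  have hunb : ∀ j, ∃ t, j < Nat.count (ChangesAt fun s => (u s).1) t := fun j =>
    ⟨Nat.nth _ j + 1, by rw [Nat.count_nth_succ_of_infinite hinf]; omega⟩
  have hr : ∀ j, H.Adj (simRobber walkFrom u j) (simRobber walkFrom u (j + 1)) := fun j =>
    destutter_adj (x := fun s => (u s).1)
      (fun s hs => (boxProd_adj_of_fst_ne (hu s) (Ne.symm hs)).1) (hunb _).choose_spec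
  have hH' : ∀ v, ∃ w, H.Adj v w :=
    have : Nontrivial V₁ := ⟨⟨_, _, (hr 0).ne⟩⟩
    hH.preconnected.exists_adj_of_nontrivial
  obtain ⟨k, i, hcap | hcap⟩ := cs.exists_playAgainst_eq hcs hH' hr
  · rcases Nat.eq_zero_or_pos (lag walkFrom u + k) with h0 | hpos
    · refine ⟨0, i, Or.inl ?_⟩
      have hlag : lag walkFrom u = 0 := by omega
      obtain rfl : k = 0 := by omega
      exact Prod.ext (hcap.trans (by rw [simRobber, hlag]; rfl)) (eq_of_lag_eq_zero hlag)
    · set s := Nat.nth (ChangesAt fun t => (u t).1) (lag walkFrom u + k - 1)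
      have hs : ChangesAt (fun t => (u t).1) s := Nat.nth_mem_of_infinite hinf _
      have hcount : Nat.count (ChangesAt fun t => (u t).1) (s + 1) = lag walkFrom u + k := by
        rw [Nat.count_succ_eq_succ_count_iff.2 hs, Nat.count_nth_of_infinite hinf]; omega
      refine ⟨s + 1, i, Or.inl ?_⟩
      rw [shadowPos_succ_of_changesAt cs hu hs hcount, hcap, simRobber, ← hcount, destutter_count]
  · obtain ⟨t, -, ht⟩ := Nat.exists_count_eq (hunb (lag walkFrom u + k)).choose_spec.le
    refine ⟨t, i, Or.inr ?_⟩
    rw [shadowPos, if_neg (by omega),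
      show Nat.count (ChangesAt fun s => (u s).1) t - lag walkFrom u + 1 = k + 1 by omega, hcap,
      simRobber, ← ht, destutter_count]

end Shadow

theorem activeCopsWin_boxProd {V₁ V₂ : Type u} {H : SimpleGraph V₁} {G : SimpleGraph V₂}
    (hH : H.Connected) (hG : G.Connected) (hHG : ∀ v, ∃ w, (H □ G).Adj v w) {m n : ℕ}
    (hm : ActiveCopsWin H m) (hn : ActiveCopsWin G n) : ActiveCopsWin (H □ G) (m + n) := by
  obtain ⟨csH, hcsH⟩ := hm
  obtain ⟨csG, hcsG⟩ := hn
  have : Nonempty V₁ := hH.nonempty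
  have : Nonempty V₂ := hG.nonempty
  let walkH : ∀ x, H.Walk (Classical.arbitrary V₁) x := fun x => (hH.preconnected _ x).some
  let walkG : ∀ y, G.Walk (Classical.arbitrary V₂) y := fun y => (hG.preconnected _ y).some
  let teamH (u : ℕ → V₁ × V₂) (t : ℕ) : Fin m → V₁ × V₂ := Shadow.shadowPos csH walkG u t
  let teamG (u : ℕ → V₁ × V₂) (t : ℕ) : Fin n → V₁ × V₂ :=
    fun i => (Shadow.shadowPos csG walkH (fun s => (u s).swap) t i).swap
  have swap_walk : ∀ u : ℕ → V₁ × V₂, (∀ t, (H □ G).Adj (u t) (u (t + 1))) →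
      ∀ t, (G □ H).Adj (u t).swap (u (t + 1)).swap := fun u hu t => boxProd_adj_swap.2 (hu t)
  refine activeCopsWin_of_causal hHG (fun u t => Fin.append (teamH u t) (teamG u t)) ?_ ?_ ?_
  · intro u u' t hu hag
    simp only [teamH, teamG, Shadow.shadowPos_congr csH hu hag,
      Shadow.shadowPos_congr csG (swap_walk u hu) fun s hs => congrArg Prod.swap (hag s hs)]
  · intro u hu t i
    refine Fin.addCases (fun i => ?_) (fun j => ?_) i
    · simpa only [Fin.append_left] using Shadow.shadowPos_adj csH hu t i
    · simpa only [Fin.append_right] using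
        boxProd_adj_swap.1 (Shadow.shadowPos_adj csG (swap_walk u hu) t j)
  · intro u hu
    rcases infinite_changesAt_fst_or_snd hu with hinf | hinf
    · obtain ⟨t, i, h⟩ := Shadow.exists_shadowPos_eq csH (walkFrom := walkG) hcsH hH hu hinf
      exact ⟨t, Fin.castAdd n i, by simpa only [Fin.append_left] using h⟩
    · obtain ⟨t, i, h⟩ := Shadow.exists_shadowPos_eq csG (walkFrom := walkH) hcsG hG
        (swap_walk u hu) hinf
      refine ⟨t, Fin.natAdd m i, ?_⟩
      simpa only [Fin.append_right, teamG, Prod.swap_swap] using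
        h.imp (congrArg Prod.swap) (congrArg Prod.swap)

theorem acop_boxProd_le_of_not_bipartite_general {V₁ : Type u} {V₂ : Type u}
    [Fintype V₁] [Fintype V₂] (H : SimpleGraph V₁) (G : SimpleGraph V₂)
    (hconnH : H.Connected) (hconnG : G.Connected) :
    acop (H.boxProd G) ≤ acop H + acop G := by
  by_cases hiso : ∃ v, (H □ G).IsIsolated v
  · obtain ⟨v, hv⟩ := hiso
    exact (Nat.sInf_le (activeCopsWin_zero_of_isIsolated hv)).trans (Nat.zero_le _)
  · exact Nat.sInf_le (activeCopsWin_boxProd hconnH hconnG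
      (fun v => not_forall_not.1 (not_exists.1 hiso v))
      (activeCopsWin_acop H) (activeCopsWin_acop G))

/-- If `G` is a non-bipartite finite connected graph and `H` is any finite
connected graph, then `acop(H □ G) ≤ acop(H) + acop(G)`. -/
theorem acop_boxProd_le_of_not_bipartite {V₁ : Type u} {V₂ : Type u}
    [Fintype V₁] [Fintype V₂] (H : SimpleGraph V₁) (G : SimpleGraph V₂)
    (hconnH : H.Connected) (hconnG : G.Connected)
    (hnb : ¬ G.Colorable 2) :
    acop (H.boxProd G) ≤ acop H + acop G :=
  acop_boxProd_le_of_not_bipartite_general H G hconnH hconnG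
end

section
/- Let T_1 and T_2 be trees each with at least two vertices, and consider the fully active game with one cop on the Cartesian product T_1 □ T_2. If the cop and robber begin at odd distance from each other (cop placing first, robber second, cop moving first), then the cop can capture the robber. -/
open SimpleGraph

universe u v

variable {V : Type u}

/-!
In `T₁ □ T₂` the distance is the sum of the distances in the two trees, so every move of either
player changes its parity. Hence it is odd whenever the cop is to move, and the cop captures as
soon as it equals `1`. Otherwise it is at least `3`, and the cop steps toward the robber in a tree
where they are at least `2` apart.

Termination comes from the potential `α · dist(c, r) + #{v | r lies on a geodesic from c to v}`,
summed over both trees, with `α ≥ |V₁|, |V₂|`. A cop step lowers it by at least `α`, since in a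
tree the set of vertices behind the robber cannot grow when the cop approaches. A robber step
raises it by at most `α - 1`: moving away from the cop shrinks the set behind him, moving toward
the cop lowers the distance term by `α`.
-/

open Finset

namespace SimpleGraph

variable {W : Type v} {G : SimpleGraph V} {H : SimpleGraph W} {T : SimpleGraph V}

theorem Connected.dist_boxProd (hG : G.Connected) (hH : H.Connected) (x y : V × W) :
    (G □ H).dist x y = G.dist x.1 y.1 + H.dist x.2 y.2 := by
  rw [dist, edist_boxProd, ENat.toNat_add (edist_ne_top_iff_reachable.2 (hG x.1 y.1))
    (edist_ne_top_iff_reachable.2 (hH x.2 y.2))]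
  rfl

theorem Connected.exists_adj_dist_lt (hG : G.Connected) {c r : V} (h : c ≠ r) :
    ∃ d, G.Adj c d ∧ G.dist d r < G.dist c r := by
  obtain ⟨p, hp⟩ := hG.exists_walk_length_eq_dist c r
  have hnil : ¬p.Nil := Walk.not_nil_of_ne h
  refine ⟨p.snd, p.adj_snd hnil, ?_⟩
  have := G.dist_le p.tail
  have := p.length_tail_add_one hnil
  omega

/-- In a tree the geodesics from `u` to `x` and to `v` are initial segments of the same path, so
both start with the edge `uw`. -/
theorem IsTree.dist_add_one_eq_of_adj_of_dist_eq_add (hT : T.IsTree) {u w x v : V}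
    (huw : T.Adj u w) (hxu : x ≠ u) (hx : T.dist u v = T.dist u x + T.dist x v)
    (hw : T.dist w v + 1 = T.dist u v) : T.dist w x + 1 = T.dist u x := by
  obtain ⟨p, hp⟩ := hT.connected.exists_walk_length_eq_dist u x
  obtain ⟨p', hp'⟩ := hT.connected.exists_walk_length_eq_dist x v
  obtain ⟨q, hq⟩ := hT.connected.exists_walk_length_eq_dist w v
  have hpath : (p.append p').IsPath := Walk.isPath_of_length_eq_dist _ (by simp [hp, hp', hx])
  have hcons : (Walk.cons huw q).IsPath := Walk.isPath_of_length_eq_dist _ (by simp [hq, hw])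
  have heq : p.append p' = Walk.cons huw q :=
    congrArg Subtype.val ((hT.isAcyclic.subsingleton_path u v).elim ⟨_, hpath⟩ ⟨_, hcons⟩)
  cases p with
  | nil => exact absurd rfl hxu
  | @cons _ s _ _ p =>
    have hsnd : w = s := by
      simpa using hT.isAcyclic.eq_snd_of_adj_start hpath huw (by simp [heq])
    subst hsnd
    have := T.dist_le p
    have := hT.connected.dist_triangle (u := u) (v := w) (w := x)
    rw [dist_eq_one_iff_adj.2 huw] at this
    simp only [Walk.length_cons] at hp
    omega

open scoped Classical in
noncomputable def stepToward (G : SimpleGraph V) (c r : V) : V :=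
  if h : ∃ d, G.Adj c d ∧ G.dist d r < G.dist c r then h.choose
  else if h' : ∃ d, G.Adj c d then h'.choose else c

theorem adj_stepToward {c : V} (h : ∃ d, G.Adj c d) (r : V) : G.Adj c (G.stepToward c r) := by
  unfold stepToward
  split_ifs with hlt
  · exact hlt.choose_spec.1
  · exact h.choose_spec

theorem Connected.adj_stepToward (hG : G.Connected) {c r : V} (h : c ≠ r) :
    G.Adj c (G.stepToward c r) :=
  SimpleGraph.adj_stepToward ((hG.exists_adj_dist_lt h).imp fun _ => And.left) r

theorem ne_of_two_le_dist {c r : V} (h : 2 ≤ G.dist c r) : c ≠ r := by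
  rintro rfl
  simp at h

theorem Connected.dist_stepToward_add_one (hG : G.Connected) {c r : V} (h : c ≠ r) :
    G.dist (G.stepToward c r) r + 1 = G.dist c r := by
  have hex := hG.exists_adj_dist_lt h
  rw [stepToward, dif_pos hex]
  have := hG.dist_triangle (u := c) (v := hex.choose) (w := r)
  rw [dist_eq_one_iff_adj.2 hex.choose_spec.1] at this
  have := hex.choose_spec.2
  omega

section Potential

variable [Fintype V]

noncomputable def behind (G : SimpleGraph V) (c r : V) : Finset V :=
  univ.filter fun v => G.dist c v = G.dist c r + G.dist r v

theorem mem_behind {c r v : V} :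
    v ∈ G.behind c r ↔ G.dist c v = G.dist c r + G.dist r v := by
  simp [behind]

theorem mem_behind_self (G : SimpleGraph V) (c r : V) : r ∈ G.behind c r := by
  simp [mem_behind]

theorem Connected.card_behind_lt_of_adj (hG : G.Connected) {c r r' : V} (h : G.Adj r r')
    (hd : G.dist c r' = G.dist c r + 1) : #(G.behind c r') < #(G.behind c r) := by
  have hrr' : G.dist r r' = 1 := dist_eq_one_iff_adj.2 h
  have hsub : G.behind c r' ⊆ G.behind c r := by
    intro v hv
    rw [mem_behind] at hv ⊢
    have := hG.dist_triangle (u := c) (v := r) (w := v)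
    have := hG.dist_triangle (u := r) (v := r') (w := v)
    omega
  refine card_lt_card ((ssubset_iff_of_subset hsub).2 ⟨r, G.mem_behind_self c r, fun hr => ?_⟩)
  rw [mem_behind, dist_comm (u := r')] at hr
  omega

theorem IsTree.behind_subset_of_adj (hT : T.IsTree) {c c' r : V} (h : T.Adj c c')
    (hd : T.dist c' r + 1 = T.dist c r) (hc' : c' ≠ r) : T.behind c' r ⊆ T.behind c r := by
  intro v hv
  rw [mem_behind] at hv ⊢
  rcases hT.dist_eq_dist_add_one_of_adj v h with hcv | hcv <;>
    rw [dist_comm (u := v), dist_comm (u := v)] at hcv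
  · omega
  · have := hT.dist_add_one_eq_of_adj_of_dist_eq_add h.symm hc'.symm hv hcv.symm
    omega

/-- Weighting the distance by `α ≥ |V|` makes it dominate any change of the `behind` count. -/
noncomputable def potential (G : SimpleGraph V) (α : ℕ) (c r : V) : ℕ :=
  α * G.dist c r + #(G.behind c r)

theorem IsTree.potential_stepToward_add_le (hT : T.IsTree) (α : ℕ) {c r : V}
    (h : 2 ≤ T.dist c r) : T.potential α (T.stepToward c r) r + α ≤ T.potential α c r := by
  have hcr := ne_of_two_le_dist h
  have hd := hT.connected.dist_stepToward_add_one hcr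
  have hne : T.stepToward c r ≠ r := by rintro h'; rw [h', dist_self] at hd; omega
  have hsub := hT.behind_subset_of_adj (hT.connected.adj_stepToward hcr) hd hne
  have := card_le_card hsub
  rw [potential, potential, ← hd, Nat.mul_succ]
  omega

theorem IsTree.potential_add_one_le_of_adj (hT : T.IsTree) {α : ℕ} (hα : Fintype.card V ≤ α)
    (c : V) {r r' : V} (h : T.Adj r r') : T.potential α c r' + 1 ≤ T.potential α c r + α := by
  rw [potential, potential]
  rcases hT.dist_eq_dist_add_one_of_adj c h with hd | hd
  · have := card_le_univ (T.behind c r')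
    have := card_pos.2 ⟨r, T.mem_behind_self c r⟩
    rw [hd, Nat.mul_succ]
    omega
  · have := hT.connected.card_behind_lt_of_adj h hd
    rw [hd, Nat.mul_succ]
    omega

end Potential

section BoxProd

variable {T₁ : SimpleGraph V} {T₂ : SimpleGraph W}

/-- The cop steps toward the robber in a tree where they are at least `2` apart: landing on the
robber's coordinate would make `behind` the whole tree and undo the decrease of the potential. -/
noncomputable def chaseMove (T₁ : SimpleGraph V) (T₂ : SimpleGraph W) (c r : V × W) : V × W :=
  if 2 ≤ T₁.dist c.1 r.1 then (T₁.stepToward c.1 r.1, c.2)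
  else if 2 ≤ T₂.dist c.2 r.2 then (c.1, T₂.stepToward c.2 r.2)
  else (T₁ □ T₂).stepToward c r

theorem adj_chaseMove [Nontrivial (V × W)] (h₁ : T₁.Connected) (h₂ : T₂.Connected)
    (c r : V × W) : (T₁ □ T₂).Adj c (chaseMove T₁ T₂ c r) := by
  unfold chaseMove
  split_ifs with hd₁ hd₂
  · exact boxProd_adj.2 (Or.inl ⟨h₁.adj_stepToward (ne_of_two_le_dist hd₁), rfl⟩)
  · exact boxProd_adj.2 (Or.inr ⟨h₂.adj_stepToward (ne_of_two_le_dist hd₂), rfl⟩)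
  · exact adj_stepToward ((h₁.boxProd h₂).preconnected.exists_adj_of_nontrivial c) r

theorem chaseMove_eq_of_adj (h₁ : T₁.Connected) (h₂ : T₂.Connected) {c r : V × W}
    (h : (T₁ □ T₂).Adj c r) : chaseMove T₁ T₂ c r = r := by
  have hd := dist_eq_one_iff_adj.2 h
  rw [h₁.dist_boxProd h₂] at hd
  rw [chaseMove, if_neg (by omega), if_neg (by omega)]
  have := (h₁.boxProd h₂).dist_stepToward_add_one h.ne
  rw [dist_eq_one_iff_adj.2 h, add_eq_right, (h₁.boxProd h₂).dist_eq_zero_iff] at this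
  exact this

variable [Fintype V] [Fintype W]

noncomputable def chasePotential (T₁ : SimpleGraph V) (T₂ : SimpleGraph W) (c r : V × W) : ℕ :=
  T₁.potential (Fintype.card V + Fintype.card W) c.1 r.1 +
    T₂.potential (Fintype.card V + Fintype.card W) c.2 r.2

theorem chaseMove_progress (hT₁ : T₁.IsTree) (hT₂ : T₂.IsTree) {c r : V × W}
    (h : 3 ≤ (T₁ □ T₂).dist c r) :
    (T₁ □ T₂).dist (chaseMove T₁ T₂ c r) r + 1 = (T₁ □ T₂).dist c r ∧
      chasePotential T₁ T₂ (chaseMove T₁ T₂ c r) r + (Fintype.card V + Fintype.card W) ≤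
        chasePotential T₁ T₂ c r := by
  have hdist := hT₁.connected.dist_boxProd hT₂.connected
  simp only [hdist] at h ⊢
  unfold chaseMove chasePotential
  split_ifs with hd₁ hd₂
  · have := hT₁.connected.dist_stepToward_add_one (ne_of_two_le_dist hd₁)
    have := hT₁.potential_stepToward_add_le (Fintype.card V + Fintype.card W) hd₁
    constructor <;> dsimp only <;> omega
  · have := hT₂.connected.dist_stepToward_add_one (ne_of_two_le_dist hd₂)
    have := hT₂.potential_stepToward_add_le (Fintype.card V + Fintype.card W) hd₂
    constructor <;> dsimp only <;> omega
  · omega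

theorem chasePotential_add_one_le_of_adj (hT₁ : T₁.IsTree) (hT₂ : T₂.IsTree) (c : V × W)
    {r r' : V × W} (h : (T₁ □ T₂).Adj r r') :
    ((T₁ □ T₂).dist c r' = (T₁ □ T₂).dist c r + 1 ∨
        (T₁ □ T₂).dist c r = (T₁ □ T₂).dist c r' + 1) ∧
      chasePotential T₁ T₂ c r' + 1 ≤
        chasePotential T₁ T₂ c r + (Fintype.card V + Fintype.card W) := by
  rw [hT₁.connected.dist_boxProd hT₂.connected, hT₁.connected.dist_boxProd hT₂.connected,
    chasePotential, chasePotential]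
  rcases boxProd_adj.1 h with ⟨hadj, heq⟩ | ⟨hadj, heq⟩ <;> rw [heq]
  · have := hT₁.dist_eq_dist_add_one_of_adj c.1 hadj
    have := hT₁.potential_add_one_le_of_adj (α := Fintype.card V + Fintype.card W) (by omega)
      c.1 hadj
    omega
  · have := hT₂.dist_eq_dist_add_one_of_adj c.2 hadj
    have := hT₂.potential_add_one_le_of_adj (α := Fintype.card V + Fintype.card W) (by omega)
      c.2 hadj
    omega

theorem chaseMove_round (hT₁ : T₁.IsTree) (hT₂ : T₂.IsTree) {c r r' : V × W}
    (hodd : Odd ((T₁ □ T₂).dist c r)) (hmiss : chaseMove T₁ T₂ c r ≠ r)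
    (h : (T₁ □ T₂).Adj r r') :
    Odd ((T₁ □ T₂).dist (chaseMove T₁ T₂ c r) r') ∧
      chasePotential T₁ T₂ (chaseMove T₁ T₂ c r) r' < chasePotential T₁ T₂ c r := by
  have hne_one : (T₁ □ T₂).dist c r ≠ 1 := fun h1 =>
    hmiss (chaseMove_eq_of_adj hT₁.connected hT₂.connected (dist_eq_one_iff_adj.1 h1))
  rw [Nat.odd_iff] at hodd ⊢
  obtain ⟨hcop, hΦcop⟩ := chaseMove_progress hT₁ hT₂ (c := c) (r := r) (by omega)
  obtain ⟨hrob, hΦrob⟩ := chasePotential_add_one_le_of_adj hT₁ hT₂ (chaseMove T₁ T₂ c r) h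
  omega

end BoxProd

end SimpleGraph

namespace ActiveCopStrategy

variable {G : SimpleGraph V}

def positional (G : SimpleGraph V) (c₀ : V) (F : V → V → V) (hF : ∀ c r, G.Adj c (F c r)) :
    ActiveCopStrategy G 1 where
  init _ := c₀
  move _ p i := F (p.1 i) p.2
  move_adj _ _ _ := hF _ _

theorem activeCapture_positional {c₀ : V} {F : V → V → V} {hF : ∀ c r, G.Adj c (F c r)}
    (P : V → V → Prop) (Φ : V → V → ℕ)
    (hround : ∀ c r r', P c r → F c r ≠ r → G.Adj r r' → P (F c r) r' ∧ Φ (F c r) r' < Φ c r)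
    (rs : ActiveRobberStrategy G 1) (h₀ : P c₀ (rs.init fun _ => c₀)) :
    ActiveCapture (positional G c₀ F hF) rs := by
  by_contra hno
  simp only [ActiveCapture, crCaptures, not_exists, not_or] at hno
  set play := crPlay 1 (positional G c₀ F hF).init rs.init (positional G c₀ F hF).move rs.move
  have hcop (t : ℕ) : (play (t + 1)).2.1 0 = F ((play t).2.1 0) (play t).2.2 := rfl
  have hrob (t : ℕ) : G.Adj (play t).2.2 (play (t + 1)).2.2 :=
    rs.move_adj (play t).1 ((positional G c₀ F hF).move (play t).1 (play t).2, (play t).2.2)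
  have hbound (t : ℕ) : P ((play t).2.1 0) (play t).2.2 ∧
      Φ ((play t).2.1 0) (play t).2.2 + t ≤ Φ c₀ (rs.init fun _ => c₀) := by
    induction t with
    | zero => exact ⟨h₀, le_refl _⟩
    | succ t ih =>
      obtain ⟨hP, hΦ⟩ := hround _ _ _ ih.1 ((hno t).2 0) (hrob t)
      rw [hcop]
      exact ⟨hP, by omega⟩
  have := (hbound (Φ c₀ (rs.init fun _ => c₀) + 1)).2
  omega

end ActiveCopStrategy

theorem active_cop_wins_boxProd_trees_of_odd_dist_general
    {V₁ : Type u} {V₂ : Type u} [Fintype V₁] [Fintype V₂]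
    (T₁ : SimpleGraph V₁) (T₂ : SimpleGraph V₂)
    (hconn₁ : T₁.Connected) (hconn₂ : T₂.Connected)
    (hac₁ : T₁.IsAcyclic) (hac₂ : T₂.IsAcyclic)
    (c₀ : V₁ × V₂) (r₀ : V₁ × V₂)
    (hodd : Odd ((T₁.boxProd T₂).dist c₀ r₀)) :
    ∃ cs : ActiveCopStrategy (T₁.boxProd T₂) 1, cs.init = (fun _ => c₀) ∧
      ∀ rs : ActiveRobberStrategy (T₁.boxProd T₂) 1,
        rs.init (fun _ => c₀) = r₀ → ActiveCapture cs rs := by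
  have : Nontrivial (V₁ × V₂) := nontrivial_of_ne c₀ r₀ (by rintro rfl; simp at hodd)
  refine ⟨ActiveCopStrategy.positional _ c₀ (chaseMove T₁ T₂) (adj_chaseMove hconn₁ hconn₂), rfl,
    fun rs hr₀ => ?_⟩
  exact ActiveCopStrategy.activeCapture_positional (fun c r => Odd ((T₁ □ T₂).dist c r))
    (chasePotential T₁ T₂) (fun _ _ _ => chaseMove_round ⟨hconn₁, hac₁⟩ ⟨hconn₂, hac₂⟩) rs
    (hr₀ ▸ hodd)

/-- Let `T₁` and `T₂` be trees each with at least two vertices, and consider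
the fully active game with one cop on `T₁ □ T₂`.  If the cop and the robber
begin at odd distance from each other, then the cop can capture the robber. -/
theorem active_cop_wins_boxProd_trees_of_odd_dist
    {V₁ : Type u} {V₂ : Type u} [Fintype V₁] [Fintype V₂] [Nontrivial V₁]
    [Nontrivial V₂] (T₁ : SimpleGraph V₁) (T₂ : SimpleGraph V₂)
    (hconn₁ : T₁.Connected) (hconn₂ : T₂.Connected)
    (hac₁ : T₁.IsAcyclic) (hac₂ : T₂.IsAcyclic)
    (c₀ : V₁ × V₂) (r₀ : V₁ × V₂)
    (hodd : Odd ((T₁.boxProd T₂).dist c₀ r₀)) :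
    ∃ cs : ActiveCopStrategy (T₁.boxProd T₂) 1, cs.init = (fun _ => c₀) ∧
      ∀ rs : ActiveRobberStrategy (T₁.boxProd T₂) 1,
        rs.init (fun _ => c₀) = r₀ → ActiveCapture cs rs :=
  active_cop_wins_boxProd_trees_of_odd_dist_general T₁ T₂ hconn₁ hconn₂ hac₁ hac₂ c₀ r₀ hodd
end
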